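/- arXiv:1808.03938 — 5 statements merged into one kernel-verified Lean document; each statement's English description precedes it below -/
import Mathlib

section
/- Let (X,r) be a non-degenerate quadratic set that is 2-cancellative: for every positive integer k less than the order of r, r^k(x,y) = (x,z) implies z = y, and r^k(x,y) = (t,y) implies x = t. Then for every y ∈ X there exists a unique x ∈ X with r(x,y) = (x,y), and for every x ∈ X there exists a unique y ∈ X with r(x,y) = (x,y). -/
def Nondegenerate {X : Type*} (r : Equiv.Perm (X × X)) : Prop :=
  (∀ x : X, Function.Bijective fun y : X => (r (x, y)).1) ∧
  (∀ y : X, Function.Bijective fun x : X => (r (x, y)).2)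

/-- `(X, r)` is 2-cancellative: for every `k ≥ 1` less than the order of `r`
(i.e. such that `r ^ k ≠ 1`), `r^k (x, y) = (x, z)` implies `z = y` and
`r^k (x, y) = (t, y)` implies `x = t`. -/
def TwoCancellative {X : Type*} (r : Equiv.Perm (X × X)) : Prop :=
  ∀ k : ℕ, 1 ≤ k → r ^ k ≠ 1 →
    (∀ x y z : X, (r ^ k) (x, y) = (x, z) → z = y) ∧
    (∀ x y t : X, (r ^ k) (x, y) = (t, y) → x = t)

theorem stmt_1 {X : Type*} (r : Equiv.Perm (X × X))
    (hnd : Nondegenerate r) (hc : TwoCancellative r) :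
    (∀ y : X, ∃! x : X, r (x, y) = (x, y)) ∧
    (∀ x : X, ∃! y : X, r (x, y) = (x, y)) := by
  obtain ⟨h1, h2⟩ := hnd
  by_cases hr : r = 1
  · subst hr
    -- the constant maps are bijective, so X is a subsingleton
    have hsub : ∀ a b : X, a = b := by
      intro a b
      exact (h1 a).1 (by simp)
    constructor
    · intro y
      exact ⟨y, by simp, fun x _ => hsub x y⟩
    · intro x
      exact ⟨x, by simp, fun y _ => hsub y x⟩
  · have hr1 : r ^ 1 ≠ 1 := by simpa using hr
    obtain ⟨hcl, hcr⟩ := hc 1 le_rfl hr1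
    simp only [pow_one] at hcl hcr
    constructor
    · intro y
      obtain ⟨x, hx⟩ := (h2 y).2 y
      simp only at hx
      have hxy : r (x, y) = ((r (x, y)).1, y) := by
        exact Prod.ext rfl hx
      have := hcr x y (r (x, y)).1 hxy
      refine ⟨x, ?_, ?_⟩
      · show r (x, y) = (x, y); rw [hxy, ← this]
      · intro x' hx'
        apply (h2 y).1
        simp only [hx', hx]
    · intro x
      obtain ⟨y, hy⟩ := (h1 x).2 x
      simp only at hy
      have hxy : r (x, y) = (x, (r (x, y)).2) := by
        exact Prod.ext hy rfl
      have := hcl x y (r (x, y)).2 hxy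
      refine ⟨y, ?_, ?_⟩
      · show r (x, y) = (x, y); rw [hxy, this]
      · intro y' hy'
        apply (h1 x).1
        simp only [hy', hy]
end

section
/- Let (X,r) be a non-degenerate 2-cancellative quadratic set with X finite of order n. Then the set of fixed points F(X,r) = {(x,y) ∈ X² : r(x,y) = (x,y)} has exactly n elements. -/
theorem stmt_2 {X : Type*} [Fintype X] (n : ℕ) (hn : Fintype.card X = n)
    (r : Equiv.Perm (X × X)) (hnd : Nondegenerate r) (hc : TwoCancellative r) :
    Set.ncard {p : X × X | r p = p} = n := by
  classical
  by_cases h1 : r = 1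
  · rcases isEmpty_or_nonempty X with hX | hX
    · have hn0 : n = 0 := by rw [← hn]; exact Fintype.card_eq_zero
      have : {p : X × X | r p = p} = ∅ := by
        ext p; exact (hX.false p.1).elim
      rw [this, hn0]; simp
    · obtain ⟨x⟩ := hX
      have hsub : Subsingleton X := by
        constructor; intro a b
        exact (hnd.1 x).1 (by simp [h1])
      have hn1 : n = 1 := by
        rw [← hn]; exact Fintype.card_eq_one_iff.mpr ⟨x, fun b => Subsingleton.elim b x⟩
      have : {p : X × X | r p = p} = {(x, x)} := by
        ext p
        simp only [Set.mem_setOf_eq, Set.mem_singleton_iff, h1, Equiv.Perm.one_apply,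
          true_iff]
        exact Prod.ext (Subsingleton.elim _ _) (Subsingleton.elim _ _)
      rw [this, hn1, Set.ncard_singleton]
  · have hc1 := hc 1 le_rfl (by simpa using h1)
    simp only [pow_one] at hc1
    have hg : ∀ x : X, ∃ y : X, (r (x, y)).1 = x := fun x => (hnd.1 x).2 x
    set g : X → X := fun x => Classical.choose (hg x) with hgdef
    have hg1 : ∀ x : X, (r (x, g x)).1 = x := fun x => Classical.choose_spec (hg x)
    have hfix : ∀ x : X, r (x, g x) = (x, g x) := by
      intro x
      have h : r (x, g x) = (x, (r (x, g x)).2) := Prod.ext (hg1 x) rfl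
      have := hc1.1 x (g x) (r (x, g x)).2 h
      rw [h, this]
    have hset : {p : X × X | r p = p} = Set.range (fun x => (x, g x)) := by
      ext p
      simp only [Set.mem_setOf_eq, Set.mem_range]
      constructor
      · intro hp
        refine ⟨p.1, ?_⟩
        have h2 : (r (p.1, g p.1)).1 = p.1 := hg1 p.1
        have h3 : (r (p.1, p.2)).1 = p.1 := by rw [show ((p.1, p.2) : X × X) = p from rfl, hp]
        have := (hnd.1 p.1).1 (h2.trans h3.symm)
        exact Prod.ext rfl this
      · rintro ⟨x, rfl⟩
        exact hfix x
    have hinj : Function.Injective (fun x : X => (x, g x)) := fun a b h => congrArg Prod.fst h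
    rw [hset, ← Set.image_univ, Set.ncard_image_of_injective _ hinj, Set.ncard_univ,
      Nat.card_eq_fintype_card, hn]
end

section
/- Let (X,r) be a non-degenerate quadratic set of finite order n. Then the set of fixed points F(X,r) = {(x,y) ∈ X² : r(x,y) = (x,y)} has at most n elements. -/
theorem stmt_3 {X : Type*} [Fintype X] (n : ℕ) (hn : Fintype.card X = n)
    (r : Equiv.Perm (X × X)) (hnd : Nondegenerate r) :
    Set.ncard {p : X × X | r p = p} ≤ n := by
  have hinj : Set.InjOn Prod.fst {p : X × X | r p = p} := by
    rintro ⟨x, y⟩ hxy ⟨x', y'⟩ hxy' (h : x = x')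
    subst h
    have h1 : (r (x, y)).1 = x := by rw [hxy]
    have h2 : (r (x, y')).1 = x := by rw [hxy']
    have := (hnd.1 x).1 (h1.trans h2.symm)
    simp_all
  calc Set.ncard {p : X × X | r p = p}
      = (Prod.fst '' {p : X × X | r p = p}).ncard := (Set.ncard_image_of_injOn hinj).symm
    _ ≤ (Set.univ : Set X).ncard := Set.ncard_le_ncard (Set.subset_univ _) Set.finite_univ
    _ = n := by rw [Set.ncard_univ, Nat.card_eq_fintype_card, hn]
end

section
/- Let (X,r) be a non-degenerate 2-cancellative quadratic set of finite order n ≥ 3, and let q be the number of orbits of the cyclic group ⟨r⟩ acting on X² which have more than one element. Then n−1 ≤ q ≤ n(n−1)/2. -/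
/-- The orbit of a pair `p` under the cyclic group generated by `r`. -/
def rOrbit {X : Type*} (r : Equiv.Perm (X × X)) (p : X × X) : Set (X × X) :=
  Set.range fun k : ℤ => (r ^ k) p

open Equiv Equiv.Perm

def nontrivialROrbits {X : Type*} (r : Perm (X × X)) : Set (Set (X × X)) :=
  {O | (∃ p, O = rOrbit r p) ∧ 1 < O.ncard}

section Orbits

variable {X : Type*} (r : Perm (X × X))

theorem rOrbit_eq_setOf_sameCycle (p : X × X) : rOrbit r p = {y | r.SameCycle p y} := rfl

theorem rOrbit_eq_singleton {p : X × X} (hp : r p = p) : rOrbit r p = {p} := by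
  ext y
  constructor
  · rintro ⟨k, rfl⟩
    exact Function.IsFixedPt.perm_zpow hp k
  · rintro rfl
    exact SameCycle.refl _ _

variable [Fintype X] [DecidableEq X]

theorem rOrbit_eq_support_cycleOf {p : X × X} (hp : r p ≠ p) :
    rOrbit r p = (r.cycleOf p).support := by
  ext y
  simp [rOrbit_eq_setOf_sameCycle, mem_support_cycleOf_iff' hp]

theorem nontrivialROrbits_eq_image_cycleFactorsFinset :
    nontrivialROrbits r =
      (fun c : Perm (X × X) => (c.support : Set (X × X))) '' r.cycleFactorsFinset := by
  ext O
  constructor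
  · rintro ⟨⟨p, rfl⟩, hO⟩
    have hp : r p ≠ p := fun hp => by simp [rOrbit_eq_singleton r hp] at hO
    exact ⟨r.cycleOf p, cycleOf_mem_cycleFactorsFinset_iff.2 (mem_support.2 hp),
      (rOrbit_eq_support_cycleOf r hp).symm⟩
  · rintro ⟨c, hc, rfl⟩
    have hcycle := (mem_cycleFactorsFinset_iff.1 hc).1
    obtain ⟨a, ha⟩ := hcycle.nonempty_support
    have hra : r a ≠ a := mem_support.1 (mem_cycleFactorsFinset_support_le hc ha)
    refine ⟨⟨a, ?_⟩, ?_⟩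
    · rw [rOrbit_eq_support_cycleOf r hra, ← cycle_is_cycleOf ha hc]
    · rw [Set.ncard_coe_finset]
      exact hcycle.two_le_card_support

theorem ncard_nontrivialROrbits : (nontrivialROrbits r).ncard = Multiset.card r.cycleType := by
  have hinj :
      Set.InjOn (fun c : Perm (X × X) => (c.support : Set (X × X))) r.cycleFactorsFinset := by
    intro c hc d hd hcd
    obtain ⟨a, ha⟩ := (mem_cycleFactorsFinset_iff.1 hc).1.nonempty_support
    have hb : a ∈ d.support := Finset.coe_inj.1 hcd ▸ ha
    rw [cycle_is_cycleOf ha hc, cycle_is_cycleOf hb hd]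
  rw [nontrivialROrbits_eq_image_cycleFactorsFinset, hinj.ncard_image, Set.ncard_coe_finset,
    cycleType_def, Multiset.card_map]
  rfl

end Orbits

section QuadraticSet

variable {X : Type*} {r : Perm (X × X)}

theorem Nondegenerate.ne_one [Nontrivial X] (hnd : Nondegenerate r) : r ≠ 1 := by
  rintro rfl
  obtain ⟨x, y, hxy⟩ := exists_pair_ne X
  exact hxy ((hnd.1 x).1 (a₁ := x) (a₂ := y) rfl)

theorem TwoCancellative.apply_eq_self_of_fst_eq (hc : TwoCancellative r) (hr : r ≠ 1)
    {p : X × X} (hp : (r p).1 = p.1) : r p = p := by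
  have h := (hc 1 le_rfl (by simpa using hr)).1 p.1 p.2 (r p).2
  simp only [pow_one, Prod.mk.eta] at h
  exact Prod.ext hp (h (Prod.ext hp rfl))

theorem TwoCancellative.injOn_fst_rOrbit [Finite X] (hc : TwoCancellative r) (p : X × X) :
    Set.InjOn Prod.fst (rOrbit r p) := by
  intro a ha b hb hab
  obtain ⟨k, hk, -, rfl⟩ := ((SameCycle.symm ha).trans hb).exists_pow_eq''
  by_contra hne
  have hk1 : r ^ k ≠ 1 := fun h => hne (by simp [h])
  have h2 := (hc k hk hk1).1 a.1 a.2 ((r ^ k) a).2 (Prod.ext hab.symm rfl)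
  exact hne (Prod.ext hab h2.symm)

variable [Fintype X] [DecidableEq X]

theorem card_fixedPoints_eq_card (hnd : Nondegenerate r) (hc : TwoCancellative r) (hr : r ≠ 1) :
    Fintype.card (Function.fixedPoints r) = Fintype.card X := by
  refine Fintype.card_of_bijective (f := fun p : Function.fixedPoints r => p.1.1) ⟨?_, ?_⟩
  · rintro ⟨⟨x, y⟩, hp⟩ ⟨⟨x', y'⟩, hp'⟩ (rfl : x = x')
    have hyy' : y = y' := (hnd.1 x).1 ((congrArg Prod.fst hp).trans (congrArg Prod.fst hp').symm)
    subst hyy'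
    rfl
  · intro x
    obtain ⟨y, hy⟩ := (hnd.1 x).2 x
    exact ⟨⟨(x, y), hc.apply_eq_self_of_fst_eq hr hy⟩, rfl⟩

theorem TwoCancellative.le_card_of_mem_cycleType (hc : TwoCancellative r) {m : ℕ}
    (hm : m ∈ r.cycleType) : m ≤ Fintype.card X := by
  obtain ⟨c, hc', rfl⟩ := Multiset.mem_map.1 hm
  obtain ⟨a, ha⟩ := (mem_cycleFactorsFinset_iff.1 hc').1.nonempty_support
  have hra : r a ≠ a := mem_support.1 (mem_cycleFactorsFinset_support_le hc' ha)
  have hinj : Set.InjOn Prod.fst (c.support : Set (X × X)) := by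
    rw [cycle_is_cycleOf ha hc', ← rOrbit_eq_support_cycleOf r hra]
    exact hc.injOn_fst_rOrbit a
  exact Finset.card_le_card_of_injOn Prod.fst (fun _ _ => Finset.mem_univ _) hinj

theorem sum_cycleType_eq_card_mul_pred (hnd : Nondegenerate r) (hc : TwoCancellative r)
    (hr : r ≠ 1) : r.cycleType.sum = Fintype.card X * (Fintype.card X - 1) := by
  have hfix := card_fixedPoints r
  have hle := sum_cycleType_le r
  rw [card_fixedPoints_eq_card hnd hc hr, Fintype.card_prod] at hfix
  rw [Fintype.card_prod] at hle
  rw [Nat.mul_sub_one]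
  omega

end QuadraticSet

theorem stmt_4 {X : Type*} [Fintype X] (n : ℕ) (hn : Fintype.card X = n)
    (hn3 : 3 ≤ n) (r : Equiv.Perm (X × X))
    (hnd : Nondegenerate r) (hc : TwoCancellative r)
    (q : ℕ)
    (hq : q = Set.ncard {O : Set (X × X) | (∃ p, O = rOrbit r p) ∧ 1 < O.ncard}) :
    n - 1 ≤ q ∧ q ≤ n * (n - 1) / 2 := by
  classical
  have : Nontrivial X := Fintype.one_lt_card_iff_nontrivial.1 (by omega)
  have hq' : q = Multiset.card r.cycleType := hq.trans (ncard_nontrivialROrbits r)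
  have hsum : r.cycleType.sum = n * (n - 1) :=
    hn ▸ sum_cycleType_eq_card_mul_pred hnd hc hnd.ne_one
  have hlow := Multiset.card_nsmul_le_sum fun m hm => two_le_of_mem_cycleType (σ := r) hm
  have hupp := Multiset.sum_le_card_nsmul r.cycleType n fun m hm =>
    hn ▸ hc.le_card_of_mem_cycleType hm
  rw [hsum, smul_eq_mul, ← hq'] at hlow hupp
  refine ⟨Nat.le_of_mul_le_mul_right (by rwa [Nat.mul_comm]) (by omega : 0 < n), ?_⟩
  exact (Nat.le_div_iff_mul_le two_pos).2 hlow
end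

section
/- Let (X,r_X) and (Y,r_Y) be disjoint quadratic sets, σ ∈ Sym(X), τ ∈ Sym(Y), and define r on Z = X ∪ Y by r = r_X on X×X, r = r_Y on Y×Y, r(y,x) = (σ(x), τ(y)) and r(x,y) = (τ(y), σ(x)) for x ∈ X, y ∈ Y. Then (Z,r) is non-degenerate if and only if both (X,r_X) and (Y,r_Y) are non-degenerate. -/
def Nondeg {A : Type*} (r : A × A → A × A) : Prop :=
  (∀ x : A, Function.Bijective fun y : A => (r (x, y)).1) ∧
  (∀ y : A, Function.Bijective fun x : A => (r (x, y)).2)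

/-- The extension of `r_X` and `r_Y` to `Z = X ⊔ Y` via permutations `σ, τ`. -/
def extMap {X Y : Type*} (rX : X × X → X × X) (rY : Y × Y → Y × Y)
    (σ : X → X) (τ : Y → Y) : (X ⊕ Y) × (X ⊕ Y) → (X ⊕ Y) × (X ⊕ Y)
  | (Sum.inl x1, Sum.inl x2) => (Sum.inl (rX (x1, x2)).1, Sum.inl (rX (x1, x2)).2)
  | (Sum.inr y1, Sum.inr y2) => (Sum.inr (rY (y1, y2)).1, Sum.inr (rY (y1, y2)).2)
  | (Sum.inr y, Sum.inl x) => (Sum.inl (σ x), Sum.inr (τ y))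
  | (Sum.inl x, Sum.inr y) => (Sum.inr (τ y), Sum.inl (σ x))

theorem stmt_18 {X Y : Type*} (rX : X × X → X × X) (rY : Y × Y → Y × Y)
    (hX : Function.Bijective rX) (hY : Function.Bijective rY)
    (σ : Equiv.Perm X) (τ : Equiv.Perm Y) :
    Nondeg (extMap rX rY σ τ) ↔ Nondeg rX ∧ Nondeg rY := by
  have e1 : ∀ x : X, (fun z : X ⊕ Y => (extMap rX rY σ τ (Sum.inl x, z)).1)
      = Sum.map (fun x2 => (rX (x, x2)).1) τ := by
    intro x; funext z; cases z <;> rfl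
  have e2 : ∀ y : Y, (fun z : X ⊕ Y => (extMap rX rY σ τ (Sum.inr y, z)).1)
      = Sum.map (σ : X → X) (fun y2 => (rY (y, y2)).1) := by
    intro y; funext z; cases z <;> rfl
  have e3 : ∀ x : X, (fun z : X ⊕ Y => (extMap rX rY σ τ (z, Sum.inl x)).2)
      = Sum.map (fun x1 => (rX (x1, x)).2) τ := by
    intro x; funext z; cases z <;> rfl
  have e4 : ∀ y : Y, (fun z : X ⊕ Y => (extMap rX rY σ τ (z, Sum.inr y)).2)
      = Sum.map (σ : X → X) (fun y1 => (rY (y1, y)).2) := by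
    intro y; funext z; cases z <;> rfl
  constructor
  · rintro ⟨h1, h2⟩
    refine ⟨⟨fun x => ?_, fun x => ?_⟩, ⟨fun y => ?_, fun y => ?_⟩⟩
    · have := h1 (Sum.inl x); rw [e1] at this
      exact (Sum.map_bijective.mp this).1
    · have := h2 (Sum.inl x); rw [e3] at this
      exact (Sum.map_bijective.mp this).1
    · have := h1 (Sum.inr y); rw [e2] at this
      exact (Sum.map_bijective.mp this).2
    · have := h2 (Sum.inr y); rw [e4] at this
      exact (Sum.map_bijective.mp this).2
  · rintro ⟨⟨hx1, hx2⟩, ⟨hy1, hy2⟩⟩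
    constructor
    · rintro (x | y)
      · rw [e1]; exact Sum.map_bijective.mpr ⟨hx1 x, τ.bijective⟩
      · rw [e2]; exact Sum.map_bijective.mpr ⟨σ.bijective, hy1 y⟩
    · rintro (x | y)
      · rw [e3]; exact Sum.map_bijective.mpr ⟨hx2 x, τ.bijective⟩
      · rw [e4]; exact Sum.map_bijective.mpr ⟨σ.bijective, hy2 y⟩
end
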